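/- In the setting where V is a vertex algebra, A ∈ V[0] has semisimple zero mode A_{(0)} on V, and Â ∈ V[≥0] satisfies Â ≡ A (mod V[>0]) with Â_{(0)} acting locally finitely on V, let Ã be the image of A under the induced automorphism v ↦ ṽ of V. Then the action of Â_{(0)} on V coincides with that of Ã_{(0)}. -/

import Mathlib

noncomputable section


/-- A ℂ-linear vertex algebra, axiomatized through the Fourier modes `a_(n)` of its fields. -/
structure VA : Type 1 where
  /-- the underlying space of states -/
  carrier : Type
  [addCommGroup : AddCommGroup carrier]
  [module : Module ℂ carrier]
  /-- the vacuum vector `|0⟩` -/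
  vac : carrier
  /-- the translation operator `T` -/
  T : carrier →ₗ[ℂ] carrier
  /-- the `n`-th mode `a_(n) = Res_z zⁿ Y(a,z)` -/
  op : carrier → ℤ → carrier →ₗ[ℂ] carrier
  op_add : ∀ a b n, op (a + b) n = op a n + op b n
  op_smul : ∀ (c : ℂ) a n, op (c • a) n = c • op a n
  /-- truncation: `a_(n) b = 0` for `n ≫ 0` -/
  trunc : ∀ a b, ∃ N : ℤ, ∀ n, N ≤ n → op a n b = 0
  /-- `Y(|0⟩, z) = id` -/
  vac_op : ∀ (n : ℤ) (b : carrier), op vac n b = if n = -1 then b else 0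
  /-- the creation axiom `a_(-1)|0⟩ = a` -/
  create : ∀ a, op a (-1) vac = a
  create_nonneg : ∀ a (n : ℤ), 0 ≤ n → op a n vac = 0
  T_vac : T vac = 0
  /-- translation covariance `(Ta)_(n) = -n·a_(n-1)` -/
  T_op : ∀ a (n : ℤ) (b : carrier), op (T a) n b = (-n : ℤ) • op a (n - 1) b

attribute [instance] VA.addCommGroup VA.module

/-- A module over a vertex algebra, given by the action of all modes `a_(n)`. -/
structure VAMod (𝒱 : VA) : Type 1 where
  carrier : Type
  [addCommGroup : AddCommGroup carrier]
  [module : Module ℂ carrier]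
  act : 𝒱.carrier → ℤ → carrier →ₗ[ℂ] carrier
  act_add : ∀ a b n, act (a + b) n = act a n + act b n
  act_smul : ∀ (c : ℂ) a n, act (c • a) n = c • act a n
  trunc : ∀ a m, ∃ N : ℤ, ∀ n, N ≤ n → act a n m = 0
  vac_act : ∀ (n : ℤ) (m : carrier), act 𝒱.vac n m = if n = -1 then m else 0

attribute [instance] VAMod.addCommGroup VAMod.module

/-- A homomorphism of vertex algebras. -/
structure VAHom (𝒱 𝒲 : VA) where
  map : 𝒱.carrier →ₗ[ℂ] 𝒲.carrier
  map_vac : map 𝒱.vac = 𝒲.vac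
  map_op : ∀ a n b, map (𝒱.op a n b) = 𝒲.op (map a) n (map b)

/-- An isomorphism of vertex algebras. -/
structure VAIso (𝒱 𝒲 : VA) where
  equiv : 𝒱.carrier ≃ₗ[ℂ] 𝒲.carrier
  map_vac : equiv 𝒱.vac = 𝒲.vac
  map_op : ∀ a n b, equiv (𝒱.op a n b) = 𝒲.op (equiv a) n (equiv b)

/-- An isomorphism of modules lying over an isomorphism `φ` of vertex algebras. -/
structure VAModIso {𝒱 𝒲 : VA} (φ : VAIso 𝒱 𝒲) (M : VAMod 𝒱) (N : VAMod 𝒲) where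
  equiv : M.carrier ≃ₗ[ℂ] N.carrier
  map_act : ∀ a n m, equiv (M.act a n m) = N.act (φ.equiv a) n (equiv m)

/-- An isomorphism of modules over the same vertex algebra. -/
structure VAModEquiv {𝒱 : VA} (M N : VAMod 𝒱) where
  equiv : M.carrier ≃ₗ[ℂ] N.carrier
  map_act : ∀ a n m, equiv (M.act a n m) = N.act a n (equiv m)

/-- A vertex algebra regarded as a module over itself. -/
def VA.selfMod (𝒱 : VA) : VAMod 𝒱 where
  carrier := 𝒱.carrier
  act := 𝒱.op
  act_add := 𝒱.op_add
  act_smul := 𝒱.op_smul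
  trunc := 𝒱.trunc
  vac_act := 𝒱.vac_op

/-- Restriction of a module along a homomorphism of vertex algebras. -/
def VAMod.restrict {𝒱 𝒲 : VA} (φ : VAHom 𝒱 𝒲) (M : VAMod 𝒲) : VAMod 𝒱 where
  carrier := M.carrier
  act a n := M.act (φ.map a) n
  act_add a b n := show M.act (φ.map (a + b)) n = _ by rw [map_add, M.act_add]
  act_smul c a n := show M.act (φ.map (c • a)) n = _ by rw [map_smul, M.act_smul]
  trunc a m := M.trunc (φ.map a) m
  vac_act n m := show M.act (φ.map 𝒱.vac) n m = _ by rw [φ.map_vac, M.vac_act]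

/-- `M` decomposes as the direct sum of the family `P` of modules over the vertex algebra `𝒱`. -/
def DecomposesAs {𝒱 : VA} (M : VAMod 𝒱) {ι : Type} (P : ι → VAMod 𝒱) : Prop :=
  ∃ e : M.carrier ≃ₗ[ℂ] Π₀ i : ι, (P i).carrier,
    ∀ a n m i, e (M.act a n m) i = (P i).act a n (e m i)

/-- The partial order on `ℂ` used for eigenvalues: `cLE μ λ` iff `λ − μ` is a nonnegative real. -/
def cLE (mu lam : ℂ) : Prop := ∃ r : ℝ, 0 ≤ r ∧ lam = mu + r

/-- `cLT μ λ` iff `λ − μ` is a positive real. -/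
def cLT (mu lam : ℂ) : Prop := ∃ r : ℝ, 0 < r ∧ lam = mu + r

/-- The eigenspace `V[λ]` of the zero mode `A_(0)` acting on `V`. -/
def eigSp (𝒱 : VA) (A : 𝒱.carrier) (lam : ℂ) : Submodule ℂ 𝒱.carrier :=
  Module.End.eigenspace (𝒱.op A 0) lam

/-- `V[>λ] = ⊕_{μ>λ} V[μ]`. -/
def gtSp (𝒱 : VA) (A : 𝒱.carrier) (lam : ℂ) : Submodule ℂ 𝒱.carrier :=
  ⨆ (mu : ℂ) (_ : cLT lam mu), eigSp 𝒱 A mu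

/-- `V[≥λ] = ⊕_{μ≥λ} V[μ]`. -/
def geSp (𝒱 : VA) (A : 𝒱.carrier) (lam : ℂ) : Submodule ℂ 𝒱.carrier :=
  ⨆ (mu : ℂ) (_ : cLE lam mu), eigSp 𝒱 A mu

/-- The zero mode `A_(0)` acts semisimply on `V`. -/
def ZeroModeSemisimple (𝒱 : VA) (A : 𝒱.carrier) : Prop :=
  (⨆ lam : ℂ, eigSp 𝒱 A lam) = ⊤

/-- The zero mode `A_(0)` acts locally finitely on `V`. -/
def ZeroModeLocallyFinite (𝒱 : VA) (A : 𝒱.carrier) : Prop :=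
  ∀ v : 𝒱.carrier, ∃ p : Submodule ℂ 𝒱.carrier,
    v ∈ p ∧ FiniteDimensional ℂ p ∧ ∀ x ∈ p, 𝒱.op A 0 x ∈ p

/-!
An automorphism `φ` carries the `A_(0)`-eigenspace `V[λ]` into the `φ(A)_(0)`-eigenspace of the
same eigenvalue, while by construction it also carries `V[λ]` into the `Â_(0)`-eigenspace of
eigenvalue `λ`. Hence `Â_(0)` and `Ã_(0) = φ(A)_(0)` agree on `φ(V[λ])` for every `λ`; these
subspaces span `V` because `A_(0)` is semisimple and `φ` is onto.
-/

theorem LinearMap.ext_of_iSup_eq_top {R M N ι : Type*} [Semiring R] [AddCommMonoid M]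
    [AddCommMonoid N] [Module R M] [Module R N] {p : ι → Submodule R M}
    (hp : ⨆ i, p i = ⊤) {f g : M →ₗ[R] N} (h : ∀ i, ∀ x ∈ p i, f x = g x) : f = g := by
  have hle : ⊤ ≤ f.eqLocus g := hp ▸ iSup_le fun i x hx ↦ h i x hx
  ext x
  exact hle Submodule.mem_top

theorem VAIso.map_mem_eigSp {𝒱 𝒲 : VA} (φ : VAIso 𝒱 𝒲) {A v : 𝒱.carrier} {lam : ℂ}
    (hv : v ∈ eigSp 𝒱 A lam) : φ.equiv v ∈ eigSp 𝒲 (φ.equiv A) lam := by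
  rw [eigSp, Module.End.mem_eigenspace_iff] at hv ⊢
  rw [← φ.map_op, hv, map_smul]

theorem zero_mode_of_Ahat_eq_zero_mode_of_Atilde_general
    (𝒱 : VA) (A Ahat : 𝒱.carrier)
    (hss : ZeroModeSemisimple 𝒱 A)
    (φ : VAIso 𝒱 𝒱)
    (hφ : ∀ lam : ℂ, ∀ v ∈ eigSp 𝒱 A lam,
        𝒱.op Ahat 0 (φ.equiv v) = lam • φ.equiv v ∧ φ.equiv v - v ∈ gtSp 𝒱 A lam) :
    𝒱.op Ahat 0 = 𝒱.op (φ.equiv A) 0 := by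
  have hcomp : 𝒱.op Ahat 0 ∘ₗ φ.equiv.toLinearMap = 𝒱.op (φ.equiv A) 0 ∘ₗ φ.equiv.toLinearMap :=
    LinearMap.ext_of_iSup_eq_top hss fun lam v hv ↦ by
      have hAtilde := Module.End.mem_eigenspace_iff.mp (φ.map_mem_eigSp hv)
      simp only [LinearMap.coe_comp, LinearEquiv.coe_coe, Function.comp_apply]
      rw [(hφ lam v hv).1, hAtilde]
  exact (LinearMap.cancel_right φ.equiv.surjective).mp hcomp

/-- Lemma 2.2 of Arakawa–Creutzig–Feigin.
In the setting of the automorphism construction — `V` a vertex algebra, `A ∈ V[0]` with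
semisimple zero mode `A_(0)`, and `Â ∈ V[≥0]` with `Â ≡ A (mod V[>0])` and `Â_(0)` locally
finite — let `Ã = φ(A)` be the image of `A` under the induced automorphism `φ : v ↦ ṽ`
(characterized by: `φ v` is the `Â_(0)`-eigenvector of eigenvalue `λ` congruent to
`v ∈ V[λ]` modulo `V[>λ]`).  Then the action of `Â_(0)` on `V` coincides with that of
`Ã_(0)`. -/
theorem zero_mode_of_Ahat_eq_zero_mode_of_Atilde
    (𝒱 : VA) (A Ahat : 𝒱.carrier)
    (hss : ZeroModeSemisimple 𝒱 A)
    (hA0 : A ∈ eigSp 𝒱 A 0)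
    (hge : Ahat ∈ geSp 𝒱 A 0)
    (hcong : Ahat - A ∈ gtSp 𝒱 A 0)
    (hlf : ZeroModeLocallyFinite 𝒱 Ahat)
    (φ : VAIso 𝒱 𝒱)
    (hφ : ∀ lam : ℂ, ∀ v ∈ eigSp 𝒱 A lam,
        𝒱.op Ahat 0 (φ.equiv v) = lam • φ.equiv v ∧ φ.equiv v - v ∈ gtSp 𝒱 A lam) :
    𝒱.op Ahat 0 = 𝒱.op (φ.equiv A) 0 :=
  zero_mode_of_Ahat_eq_zero_mode_of_Atilde_general 𝒱 A Ahat hss φ hφ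

end
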